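/- arXiv:0806.0055 — 2 statements merged into one kernel-verified Lean document; each statement's English description precedes it below -/
import Mathlib

section
/- For positive integers j, k the double integral α_{2j-1,2k}[1] = ∫_ℝ ∫_ℝ e^{-(x²+y²)/2} x^{2j-2} y^{2k-1} sgn(y−x) dx dy satisfies the recursion α_{2j-1,2k}[1] = 2(k−1) α_{2j-1,2k-2}[1] + 2 Γ(j+k−3/2), and consequently has the closed form α_{2j-1,2k}[1] = 2^k (k−1)! Σ_{p=1}^{k} Γ(j+p−3/2) / (2^{p-1} (p−1)!). -/
/-!
Integration by parts shows that `-P_m(y) e^{-y²/2}` is an antiderivative of `y^{2m+1} e^{-y²/2}`,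
where `P_m = gaussTailPoly m`, i.e. `P_0 = 1` and `P_{m+1}(y) = y^{2m+2} + (2m+2) P_m(y)`.
Splitting the `y`-integral at `y = x` therefore gives
`∫ y^{2m+1} e^{-y²/2} sgn(y - x) dy = 2 P_m(x) e^{-x²/2}`, so that
`α_{2n+1,2m+2} = 2 ∫ x^{2n} P_m(x) e^{-x²} dx`. The recursion defining `P_m` turns into the
recursion for `α`, the new term being the Gaussian moment `∫ x^{2k} e^{-x²} dx = Γ(k + 1/2)`;
unrolling the recursion gives the closed form.
-/

open MeasureTheory

/-- `α_{j,k}[1] = ∫∫ e^{-(x²+y²)/2} x^{j-1} y^{k-1} sgn(y-x) dx dy`. -/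
noncomputable def alpha (j k : ℕ) : ℝ :=
  ∫ x : ℝ, ∫ y : ℝ, Real.exp (-(x ^ 2 + y ^ 2) / 2) * x ^ (j - 1) * y ^ (k - 1) *
    Real.sign (y - x)

open Real Set Filter Topology

noncomputable def gaussTailPoly : ℕ → ℝ → ℝ
  | 0, _ => 1
  | m + 1, x => x ^ (2 * (m + 1)) + 2 * (m + 1) * gaussTailPoly m x

lemma hasDerivAt_exp_neg_sq_div_two (y : ℝ) :
    HasDerivAt (fun y => exp (-y ^ 2 / 2)) (-y * exp (-y ^ 2 / 2)) y := by
  have h : HasDerivAt (fun y : ℝ => -y ^ 2 / 2) (-y) y := by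
    refine ((hasDerivAt_pow 2 y).fun_neg.div_const 2).congr_deriv ?_
    norm_num
    ring
  simpa only [mul_comm] using h.exp

lemma hasDerivAt_neg_gaussTailPoly_mul_exp (m : ℕ) (y : ℝ) :
    HasDerivAt (fun y => -(gaussTailPoly m y * exp (-y ^ 2 / 2)))
      (y ^ (2 * m + 1) * exp (-y ^ 2 / 2)) y := by
  induction m with
  | zero => simpa [gaussTailPoly] using (hasDerivAt_exp_neg_sq_div_two y).fun_neg
  | succ m ih =>
    have hsplit : (fun y => -(gaussTailPoly (m + 1) y * exp (-y ^ 2 / 2))) = fun y =>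
        -(y ^ (2 * (m + 1)) * exp (-y ^ 2 / 2)) +
          2 * (m + 1) * -(gaussTailPoly m y * exp (-y ^ 2 / 2)) := by
      ext y
      simp only [gaussTailPoly]
      ring
    rw [hsplit]
    refine (((hasDerivAt_pow (2 * (m + 1)) y).fun_mul (hasDerivAt_exp_neg_sq_div_two y)).fun_neg
      |>.fun_add (ih.const_mul (2 * (m + 1) : ℝ))).congr_deriv ?_
    rw [show 2 * (m + 1) - 1 = 2 * m + 1 by omega]
    push_cast
    ring

lemma integrable_pow_mul_exp_neg_mul_sq {b : ℝ} (hb : 0 < b) (n : ℕ) :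
    Integrable fun x : ℝ => x ^ n * exp (-b * x ^ 2) := by
  simpa only [rpow_natCast] using
    integrable_rpow_mul_exp_neg_mul_sq hb (s := n) (by linarith [n.cast_nonneg (α := ℝ)])

lemma integrable_pow_mul_exp_neg_sq (n : ℕ) : Integrable fun x : ℝ => x ^ n * exp (-x ^ 2) := by
  simpa using integrable_pow_mul_exp_neg_mul_sq one_pos n

lemma tendsto_pow_mul_exp_neg_mul_sq_cocompact {b : ℝ} (hb : 0 < b) (n : ℕ) :
    Tendsto (fun x : ℝ => x ^ n * exp (-b * x ^ 2)) (cocompact ℝ) (𝓝 0) := by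
  rw [tendsto_zero_iff_norm_tendsto_zero]
  simpa [abs_mul, abs_pow, rpow_natCast] using
    tendsto_rpow_abs_mul_exp_neg_mul_sq_cocompact hb n

lemma tendsto_gaussTailPoly_mul_exp_cocompact (m : ℕ) :
    Tendsto (fun y => gaussTailPoly m y * exp (-y ^ 2 / 2)) (cocompact ℝ) (𝓝 0) := by
  have hexp (n : ℕ) : Tendsto (fun y : ℝ => y ^ n * exp (-y ^ 2 / 2)) (cocompact ℝ) (𝓝 0) := by
    convert tendsto_pow_mul_exp_neg_mul_sq_cocompact (b := 1 / 2) (by norm_num) n using 4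
    ring
  induction m with
  | zero => simpa [gaussTailPoly] using hexp 0
  | succ m ih =>
    have h := (hexp (2 * (m + 1))).add (ih.const_mul (2 * (m + 1) : ℝ))
    rw [mul_zero, add_zero] at h
    convert h using 2 with y
    simp only [gaussTailPoly]
    ring

lemma integral_mul_sign_sub_of_hasDerivAt {F f : ℝ → ℝ} (hF : ∀ y, HasDerivAt F (f y) y)
    (hf : Integrable f) (hbot : Tendsto F atBot (𝓝 0)) (htop : Tendsto F atTop (𝓝 0))
    (x : ℝ) : ∫ y, f y * sign (y - x) = -2 * F x := by
  have hsign : (fun y => f y * sign (y - x)) =ᵐ[volume]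
      fun y => (Ioi x).indicator f y - (Iic x).indicator f y := by
    filter_upwards [Measure.ae_ne volume x] with y hy
    rcases hy.lt_or_gt with h | h
    · simp [sign_of_neg (sub_neg.2 h), h.le, h.not_gt]
    · simp [sign_of_pos (sub_pos.2 h), h, h.not_ge]
  rw [integral_congr_ae hsign, integral_sub (hf.indicator measurableSet_Ioi)
      (hf.indicator measurableSet_Iic), integral_indicator measurableSet_Ioi,
    integral_indicator measurableSet_Iic,
    integral_Ioi_of_hasDerivAt_of_tendsto' (fun y _ => hF y) hf.integrableOn htop,
    integral_Iic_of_hasDerivAt_of_tendsto' (fun y _ => hF y) hf.integrableOn hbot]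
  ring

lemma integral_pow_mul_exp_mul_sign_sub (m : ℕ) (x : ℝ) :
    ∫ y, y ^ (2 * m + 1) * exp (-y ^ 2 / 2) * sign (y - x) =
      2 * gaussTailPoly m x * exp (-x ^ 2 / 2) := by
  have hf : Integrable fun y : ℝ => y ^ (2 * m + 1) * exp (-y ^ 2 / 2) := by
    convert integrable_pow_mul_exp_neg_mul_sq (b := 1 / 2) (by norm_num) (2 * m + 1) using 4
    ring
  have hlim := (tendsto_gaussTailPoly_mul_exp_cocompact m).neg
  rw [neg_zero] at hlim
  rw [integral_mul_sign_sub_of_hasDerivAt (hasDerivAt_neg_gaussTailPoly_mul_exp m) hf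
    (hlim.mono_left atBot_le_cocompact) (hlim.mono_left atTop_le_cocompact)]
  ring

lemma integral_pow_two_mul_mul_exp_neg_sq (n : ℕ) :
    ∫ x : ℝ, x ^ (2 * n) * exp (-x ^ 2) = Gamma (n + 1 / 2) := by
  have heven : (fun x : ℝ => x ^ (2 * n) * exp (-x ^ 2)) =
      fun x => |x| ^ ((2 * n : ℕ) : ℝ) * exp (-|x| ^ (2 : ℝ)) := by
    ext x
    rw [rpow_natCast, rpow_two, pow_mul, pow_mul, sq_abs]
  rw [heven, integral_comp_abs (f := fun t => t ^ ((2 * n : ℕ) : ℝ) * exp (-t ^ (2 : ℝ))),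
    integral_rpow_mul_exp_neg_rpow two_pos (by linarith [(2 * n).cast_nonneg (α := ℝ)])]
  push_cast
  ring_nf

lemma integrable_pow_mul_gaussTailPoly_mul_exp (n m : ℕ) :
    Integrable fun x : ℝ => x ^ (2 * n) * gaussTailPoly m x * exp (-x ^ 2) := by
  induction m with
  | zero => simpa [gaussTailPoly] using integrable_pow_mul_exp_neg_sq (2 * n)
  | succ m ih =>
    refine ((integrable_pow_mul_exp_neg_sq (2 * (n + m + 1))).add
      (ih.const_mul (2 * (m + 1) : ℝ))).congr (ae_of_all _ fun x => ?_)
    simp only [Pi.add_apply, gaussTailPoly]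
    ring

lemma alpha_eq_integral_gaussTailPoly (n m : ℕ) :
    alpha (2 * n + 1) (2 * (m + 1)) =
      2 * ∫ x, x ^ (2 * n) * gaussTailPoly m x * exp (-x ^ 2) := by
  have hinner (x : ℝ) : ∫ y, exp (-(x ^ 2 + y ^ 2) / 2) * x ^ (2 * n) * y ^ (2 * m + 1) *
      sign (y - x) = 2 * (x ^ (2 * n) * gaussTailPoly m x * exp (-x ^ 2)) := by
    have hsplit (y : ℝ) : exp (-(x ^ 2 + y ^ 2) / 2) * x ^ (2 * n) * y ^ (2 * m + 1) *
        sign (y - x) = exp (-x ^ 2 / 2) * x ^ (2 * n) *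
          (y ^ (2 * m + 1) * exp (-y ^ 2 / 2) * sign (y - x)) := by
      rw [show -(x ^ 2 + y ^ 2) / 2 = -x ^ 2 / 2 + -y ^ 2 / 2 by ring, exp_add]
      ring
    rw [integral_congr_ae (ae_of_all _ hsplit), integral_const_mul,
      integral_pow_mul_exp_mul_sign_sub,
      show exp (-x ^ 2) = exp (-x ^ 2 / 2) * exp (-x ^ 2 / 2) by rw [← exp_add, add_halves]]
    ring
  rw [alpha, show 2 * n + 1 - 1 = 2 * n by omega, show 2 * (m + 1) - 1 = 2 * m + 1 by omega,
    integral_congr_ae (ae_of_all _ hinner), integral_const_mul]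

lemma alpha_two_mul_add_one_two_mul_succ (n m : ℕ) :
    alpha (2 * n + 1) (2 * (m + 1)) =
      2 * m * alpha (2 * n + 1) (2 * m) + 2 * Gamma (n + m + 1 / 2) := by
  rw [alpha_eq_integral_gaussTailPoly]
  cases m with
  | zero => simp [gaussTailPoly, integral_pow_two_mul_mul_exp_neg_sq]
  | succ m =>
    have hsplit (x : ℝ) : x ^ (2 * n) * gaussTailPoly (m + 1) x * exp (-x ^ 2) =
        x ^ (2 * (n + (m + 1))) * exp (-x ^ 2) +
          2 * (m + 1) * (x ^ (2 * n) * gaussTailPoly m x * exp (-x ^ 2)) := by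
      simp only [gaussTailPoly]
      ring
    rw [integral_congr_ae (ae_of_all _ hsplit), integral_add
        (integrable_pow_mul_exp_neg_sq _)
        ((integrable_pow_mul_gaussTailPoly_mul_exp n m).const_mul _),
      integral_const_mul, integral_pow_two_mul_mul_exp_neg_sq, alpha_eq_integral_gaussTailPoly]
    push_cast
    ring

lemma eq_factorial_mul_sum_of_recurrence {a g : ℕ → ℝ}
    (h : ∀ k, 1 ≤ k → a k = 2 * ((k : ℝ) - 1) * a (k - 1) + 2 * g k) (k : ℕ) (hk : 1 ≤ k) :
    a k = 2 ^ k * (k - 1).factorial *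
      ∑ p ∈ Finset.Icc 1 k, g p / (2 ^ (p - 1) * (p - 1).factorial) := by
  induction k, hk using Nat.le_induction with
  | base => simp [h 1 le_rfl]
  | succ k hk ih =>
    rw [h (k + 1) (by omega), Nat.add_sub_cancel, ih, Finset.sum_Icc_succ_top (by omega),
      Nat.add_sub_cancel]
    obtain ⟨i, rfl⟩ : ∃ i, k = i + 1 := ⟨k - 1, by omega⟩
    rw [Nat.add_sub_cancel, Nat.factorial_succ]
    field_simp
    push_cast
    ring

/-- recursion and closed form for `α_{2j-1,2k}[1]`. -/
theorem alpha_odd_even (j : ℕ) (hj : 1 ≤ j) :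
    (∀ k : ℕ, 2 ≤ k →
      alpha (2 * j - 1) (2 * k) =
        2 * ((k : ℝ) - 1) * alpha (2 * j - 1) (2 * (k - 1)) +
          2 * Real.Gamma ((j : ℝ) + (k : ℝ) - 3 / 2)) ∧
    (∀ k : ℕ, 1 ≤ k →
      alpha (2 * j - 1) (2 * k) =
        2 ^ k * (k - 1).factorial *
          ∑ p ∈ Finset.Icc 1 k,
            Real.Gamma ((j : ℝ) + (p : ℝ) - 3 / 2) / (2 ^ (p - 1) * (p - 1).factorial)) := by
  obtain ⟨n, rfl⟩ : ∃ n, j = n + 1 := ⟨j - 1, by omega⟩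
  have hrec : ∀ k : ℕ, 1 ≤ k →
      alpha (2 * (n + 1) - 1) (2 * k) =
        2 * ((k : ℝ) - 1) * alpha (2 * (n + 1) - 1) (2 * (k - 1)) +
          2 * Gamma (((n + 1 : ℕ) : ℝ) + (k : ℝ) - 3 / 2) := by
    intro k hk
    obtain ⟨m, rfl⟩ : ∃ m, k = m + 1 := ⟨k - 1, by omega⟩
    rw [show 2 * (n + 1) - 1 = 2 * n + 1 by omega, alpha_two_mul_add_one_two_mul_succ,
      Nat.add_sub_cancel]
    push_cast
    ring_nf
  exact ⟨fun k hk => hrec k (by omega),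
    eq_factorial_mul_sum_of_recurrence (a := fun k => alpha (2 * (n + 1) - 1) (2 * k)) hrec⟩
end

section
/- For n ≥ 0, the complementary error function integral ∫_ℝ e^{-x²} H_{2n}(x y) dx = √π ((2n)!/n!) (y² − 1)^n holds for all real y. -/
open MeasureTheory

/-- Physicists' Hermite polynomials via the three-term recurrence. -/
noncomputable def physHermite : ℕ → ℝ → ℝ
  | 0, _ => 1
  | 1, x => 2 * x
  | (n + 2), x => 2 * x * physHermite (n + 1) x - 2 * (n + 1) * physHermite n x

/-!
Write `I m = ∫ e^{-x²} H_m(xy) dx`. Expanding `H_{m+2}(xy)` by the three-term recurrence leaves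
the moment `∫ x e^{-x²} H_{m+1}(xy) dx`; since `x e^{-x²} = -(e^{-x²})'/2` and
`H_{m+1}' = 2(m+1) H_m`, integration by parts turns it into `(m+1) y I m`. Hence
`I (m+2) = 2(m+1)(y² - 1) I m`, and iterating from the Gaussian integral `I 0 = √π` gives the
formula.
-/

open Polynomial Real

theorem hasDerivAt_physHermite_add_two {n : ℕ} {x a b : ℝ}
    (ha : HasDerivAt (physHermite (n + 1)) a x) (hb : HasDerivAt (physHermite n) b x) :
    HasDerivAt (physHermite (n + 2))
      (2 * physHermite (n + 1) x + 2 * x * a - 2 * (n + 1) * b) x := by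
  have h := (((hasDerivAt_id' x).const_mul 2).fun_mul ha).fun_sub
    (hb.const_mul (2 * ((n : ℝ) + 1)))
  exact h.congr_deriv (by ring)

theorem hasDerivAt_physHermite_succ :
    ∀ (n : ℕ) (x : ℝ), HasDerivAt (physHermite (n + 1)) (2 * (n + 1) * physHermite n x) x
  | 0, x => by simpa [physHermite] using (hasDerivAt_id x).const_mul (2 : ℝ)
  | 1, x => by
    convert hasDerivAt_physHermite_add_two (hasDerivAt_physHermite_succ 0 x)
      (hasDerivAt_const x (1 : ℝ)) using 1
    simp only [physHermite]
    push_cast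
    ring
  | n + 2, x => by
    convert hasDerivAt_physHermite_add_two (hasDerivAt_physHermite_succ (n + 1) x)
      (hasDerivAt_physHermite_succ n x) using 1
    simp only [physHermite]
    push_cast
    ring

theorem exists_eval_eq_physHermite_mul (y : ℝ) :
    ∀ n : ℕ, ∃ p : ℝ[X], ∀ x, p.eval x = physHermite n (x * y)
  | 0 => ⟨1, by simp [physHermite]⟩
  | 1 => ⟨C (2 * y) * X, fun x => by
    simp only [physHermite, eval_mul, eval_C, eval_X]; ring⟩
  | n + 2 => by
    obtain ⟨p, hp⟩ := exists_eval_eq_physHermite_mul y n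
    obtain ⟨q, hq⟩ := exists_eval_eq_physHermite_mul y (n + 1)
    exact ⟨C (2 * y) * X * q - C (2 * ((n : ℝ) + 1)) * p, fun x => by
      simp only [physHermite, eval_sub, eval_mul, eval_C, eval_X, hp, hq]; ring⟩

theorem integrable_eval_mul_exp_neg_mul_sq (p : ℝ[X]) {b : ℝ} (hb : 0 < b) :
    Integrable fun x : ℝ => p.eval x * exp (-b * x ^ 2) := by
  induction p using Polynomial.induction_on' with
  | add p q hp hq => simpa [add_mul] using hp.fun_add hq
  | monomial n a =>
    have h := integrable_rpow_mul_exp_neg_mul_sq hb (s := n)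
      (by linarith [n.cast_nonneg (α := ℝ)])
    simpa [mul_assoc] using h.const_mul a

theorem integrable_eval_mul_exp_neg_sq_mul_physHermite (q : ℝ[X]) (n : ℕ) (y : ℝ) :
    Integrable fun x : ℝ => q.eval x * (exp (-x ^ 2) * physHermite n (x * y)) := by
  obtain ⟨p, hp⟩ := exists_eval_eq_physHermite_mul y n
  refine (integrable_eval_mul_exp_neg_mul_sq (q * p) one_pos).congr
    (Filter.Eventually.of_forall fun x => ?_)
  simp only [eval_mul, hp, neg_mul, one_mul]
  ring

theorem integrable_exp_neg_sq_mul_physHermite (n : ℕ) (y : ℝ) :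
    Integrable fun x : ℝ => exp (-x ^ 2) * physHermite n (x * y) := by
  simpa using integrable_eval_mul_exp_neg_sq_mul_physHermite 1 n y

theorem integrable_mul_exp_neg_sq_mul_physHermite (n : ℕ) (y : ℝ) :
    Integrable fun x : ℝ => x * (exp (-x ^ 2) * physHermite n (x * y)) := by
  simpa using integrable_eval_mul_exp_neg_sq_mul_physHermite X n y

theorem integral_mul_exp_neg_sq_mul_physHermite_succ (m : ℕ) (y : ℝ) :
    ∫ x : ℝ, x * (exp (-x ^ 2) * physHermite (m + 1) (x * y)) =
      (m + 1) * y * ∫ x : ℝ, exp (-x ^ 2) * physHermite m (x * y) := by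
  have hu (x : ℝ) : HasDerivAt (fun x => physHermite (m + 1) (x * y))
      (2 * (m + 1) * y * physHermite m (x * y)) x :=
    ((hasDerivAt_physHermite_succ m (x * y)).comp x
      ((hasDerivAt_id' x).mul_const y)).congr_deriv (by ring)
  have hv (x : ℝ) : HasDerivAt (fun x => exp (-x ^ 2)) (-2 * x * exp (-x ^ 2)) x :=
    (((hasDerivAt_pow 2 x).fun_neg).exp).congr_deriv (by
      simp only [Nat.cast_ofNat, Nat.add_one_sub_one, pow_one]; ring)
  have huv' : Integrable ((fun x => physHermite (m + 1) (x * y)) *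
      fun x => -2 * x * exp (-x ^ 2)) :=
    ((integrable_mul_exp_neg_sq_mul_physHermite (m + 1) y).const_mul (-2)).congr
      (Filter.Eventually.of_forall fun x => by simp only [Pi.mul_apply]; ring)
  have hu'v : Integrable ((fun x => 2 * (m + 1) * y * physHermite m (x * y)) *
      fun x => exp (-x ^ 2)) :=
    ((integrable_exp_neg_sq_mul_physHermite m y).const_mul (2 * (m + 1) * y)).congr
      (Filter.Eventually.of_forall fun x => by simp only [Pi.mul_apply]; ring)
  have huv : Integrable ((fun x => physHermite (m + 1) (x * y)) * fun x => exp (-x ^ 2)) :=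
    (integrable_exp_neg_sq_mul_physHermite (m + 1) y).congr
      (Filter.Eventually.of_forall fun x => by simp only [Pi.mul_apply]; ring)
  have hparts := integral_mul_deriv_eq_deriv_mul_of_integrable (fun x _ => hu x) (fun x _ => hv x)
    huv' hu'v huv
  calc ∫ x : ℝ, x * (exp (-x ^ 2) * physHermite (m + 1) (x * y))
      = ∫ x : ℝ, (-1 / 2 : ℝ) * (physHermite (m + 1) (x * y) * (-2 * x * exp (-x ^ 2))) := by
        congr 1; ext x; ring
    _ = (-1 / 2) * -∫ x : ℝ, 2 * (m + 1) * y * physHermite m (x * y) * exp (-x ^ 2) := by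
        rw [integral_const_mul, hparts]
    _ = (-1 / 2) * -∫ x : ℝ, 2 * (m + 1) * y * (exp (-x ^ 2) * physHermite m (x * y)) := by
        congr 3; ext x; ring
    _ = (m + 1) * y * ∫ x : ℝ, exp (-x ^ 2) * physHermite m (x * y) := by
        rw [integral_const_mul]; ring

theorem integral_exp_neg_sq_mul_physHermite_add_two (m : ℕ) (y : ℝ) :
    ∫ x : ℝ, exp (-x ^ 2) * physHermite (m + 2) (x * y) =
      2 * (m + 1) * (y ^ 2 - 1) * ∫ x : ℝ, exp (-x ^ 2) * physHermite m (x * y) := by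
  calc ∫ x : ℝ, exp (-x ^ 2) * physHermite (m + 2) (x * y)
      = ∫ x : ℝ, 2 * y * (x * (exp (-x ^ 2) * physHermite (m + 1) (x * y)))
          - 2 * (m + 1) * (exp (-x ^ 2) * physHermite m (x * y)) := by
        congr 1; ext x; simp only [physHermite]; ring
    _ = 2 * y * (∫ x : ℝ, x * (exp (-x ^ 2) * physHermite (m + 1) (x * y)))
          - 2 * (m + 1) * ∫ x : ℝ, exp (-x ^ 2) * physHermite m (x * y) := by
        rw [integral_sub ((integrable_mul_exp_neg_sq_mul_physHermite _ y).const_mul _)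
          ((integrable_exp_neg_sq_mul_physHermite m y).const_mul _),
          integral_const_mul, integral_const_mul]
    _ = _ := by
        rw [integral_mul_exp_neg_sq_mul_physHermite_succ]; ring

/-- `∫ e^{-x²} H_{2n}(xy) dx = √π (2n)!/n! (y²-1)^n`. -/
theorem integral_hermite_even (n : ℕ) (y : ℝ) :
    (∫ x : ℝ, Real.exp (-x ^ 2) * physHermite (2 * n) (x * y)) =
      Real.sqrt Real.pi * ((2 * n).factorial : ℝ) / (n.factorial : ℝ) * (y ^ 2 - 1) ^ n := by
  induction n with
  | zero => simpa [physHermite] using integral_gaussian 1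
  | succ n ih =>
    rw [show 2 * (n + 1) = 2 * n + 2 by ring, integral_exp_neg_sq_mul_physHermite_add_two, ih,
      Nat.factorial_succ, Nat.factorial_succ, Nat.factorial_succ]
    push_cast
    field_simp
    ring
end
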